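/- For m > 1, (|a|^{m-1}a - |b|^{m-1}b)(a - b) ≥ 0 for all a, b ∈ ℝ, i.e., the map u ↦ |u|^{m-1}u is monotone, and moreover (φ(a) - φ(b))(a - b) ≥ 2^{1-m} |a-b|^{m+1} for all a, b ∈ ℝ, where φ(u) = |u|^{m-1}u. -/
import Mathlib

open NNReal

/-- Superadditivity of `x ↦ x^p` for `p ≥ 1` on nonnegative reals. -/
lemma pm_super (x y p : ℝ) (hx : 0 ≤ x) (hy : 0 ≤ y) (hp : 1 ≤ p) :
    x ^ p + y ^ p ≤ (x + y) ^ p := by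
  have h := NNReal.add_rpow_le_rpow_add (⟨x, hx⟩ : ℝ≥0) (⟨y, hy⟩ : ℝ≥0) hp
  have := (NNReal.coe_le_coe).2 h
  push_cast [NNReal.coe_rpow] at this
  exact this

/-- Convexity bound: `(x+y)^p ≤ 2^(p-1) (x^p + y^p)` for `p ≥ 1`, `x y ≥ 0`. -/
lemma pm_conv (x y p : ℝ) (hx : 0 ≤ x) (hy : 0 ≤ y) (hp : 1 ≤ p) :
    (x + y) ^ p ≤ 2 ^ (p - 1) * (x ^ p + y ^ p) := by
  have h := NNReal.rpow_add_le_mul_rpow_add_rpow (⟨x, hx⟩ : ℝ≥0) (⟨y, hy⟩ : ℝ≥0) hp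
  have := (NNReal.coe_le_coe).2 h
  push_cast [NNReal.coe_rpow] at this
  exact this

/-- Key pointwise bound when `|b| ≤ a`. -/
lemma pm_key (m : ℝ) (hm : 1 < m) (a b : ℝ) (hab : |b| ≤ a) :
    (2 : ℝ) ^ (1 - m) * (a - b) ^ m ≤ a ^ m - |b| ^ (m - 1) * b := by
  have ha : (0 : ℝ) ≤ a := (abs_nonneg b).trans hab
  have hm0 : m ≠ 0 := by positivity
  have habs : ∀ c : ℝ, 0 ≤ c → c ^ (m - 1) * c = c ^ m := by
    intro c hc
    rcases eq_or_lt_of_le hc with h | h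
    · rw [← h, Real.zero_rpow hm0]; ring
    · rw [← Real.rpow_add_one (ne_of_gt h)]; ring_nf
  rcases le_or_gt 0 b with hb | hb
  · -- b ≥ 0 : superadditivity
    rw [abs_of_nonneg hb, habs b hb]
    have hba : b ≤ a := le_trans (le_abs_self b) hab
    have h1 : (a - b) ^ m + b ^ m ≤ a ^ m := by
      have := pm_super (a - b) b m (by linarith) hb hm.le
      simpa using this
    have h2 : (2 : ℝ) ^ (1 - m) ≤ 1 :=
      Real.rpow_le_one_of_one_le_of_nonpos one_le_two (by linarith)
    have h3 : (0 : ℝ) ≤ (a - b) ^ m := Real.rpow_nonneg (by linarith) m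
    nlinarith
  · -- b < 0 : convexity
    rw [abs_of_neg hb]
    have h1 : (a + -b) ^ m ≤ 2 ^ (m - 1) * (a ^ m + (-b) ^ m) :=
      pm_conv a (-b) m ha (by linarith) hm.le
    have h2 : (-b) ^ (m - 1) * b = -((-b) ^ m) := by
      have := habs (-b) (by linarith); nlinarith [this]
    rw [h2]
    have h3 : (2 : ℝ) ^ (1 - m) * (2 : ℝ) ^ (m - 1) = 1 := by
      rw [← Real.rpow_add (by norm_num)]; norm_num
    have h4 : (0 : ℝ) < (2 : ℝ) ^ (1 - m) := Real.rpow_pos_of_pos (by norm_num) _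
    have h5 : (2 : ℝ) ^ (1 - m) * (a + -b) ^ m ≤ a ^ m + (-b) ^ m := by
      calc (2 : ℝ) ^ (1 - m) * (a + -b) ^ m
          ≤ (2 : ℝ) ^ (1 - m) * ((2 : ℝ) ^ (m - 1) * (a ^ m + (-b) ^ m)) := by
            exact mul_le_mul_of_nonneg_left h1 h4.le
        _ = a ^ m + (-b) ^ m := by rw [← mul_assoc, h3, one_mul]
    have : a - b = a + -b := by ring
    rw [this]
    linarith

/-- Half of the theorem, under a WLOG normalization. -/
lemma pm_main (m : ℝ) (hm : 1 < m) (a b : ℝ) (h1 : b ≤ a) (h2 : 0 ≤ a + b) :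
    (2 : ℝ) ^ (1 - m) * |a - b| ^ (m + 1)
      ≤ (|a| ^ (m - 1) * a - |b| ^ (m - 1) * b) * (a - b) := by
  have ha : 0 ≤ a := by rcases le_or_gt 0 b with h | h <;> linarith
  have hab : |b| ≤ a := abs_le.2 ⟨by linarith, h1⟩
  have key := pm_key m hm a b hab
  have hm0 : m ≠ 0 := by positivity
  have hfa : |a| ^ (m - 1) * a = a ^ m := by
    rw [abs_of_nonneg ha]
    rcases eq_or_lt_of_le ha with h | h
    · rw [← h, Real.zero_rpow hm0]; ring
    · rw [← Real.rpow_add_one (ne_of_gt h)]; ring_nf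
  rw [hfa, abs_of_nonneg (by linarith : (0:ℝ) ≤ a - b)]
  have hd : 0 ≤ a - b := by linarith
  have hpow : (a - b) ^ (m + 1) = (a - b) ^ m * (a - b) := by
    rcases eq_or_lt_of_le hd with h | h
    · rw [← h, Real.zero_rpow hm0, Real.zero_rpow (by linarith)]; ring
    · rw [← Real.rpow_add_one (ne_of_gt h)]
  rw [hpow, ← mul_assoc]
  exact mul_le_mul_of_nonneg_right key hd

/-- For `m > 1` the map `φ(u) = |u|^(m-1) u` is monotone and satisfies the
quantitative bound `(φ a - φ b)(a - b) ≥ 2^(1-m) |a-b|^(m+1)`. -/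
theorem power_monotonicity (m : ℝ) (hm : 1 < m) (a b : ℝ) :
    0 ≤ (|a| ^ (m - 1) * a - |b| ^ (m - 1) * b) * (a - b) ∧
    (2 : ℝ) ^ (1 - m) * |a - b| ^ (m + 1)
      ≤ (|a| ^ (m - 1) * a - |b| ^ (m - 1) * b) * (a - b) := by
  have main : (2 : ℝ) ^ (1 - m) * |a - b| ^ (m + 1)
      ≤ (|a| ^ (m - 1) * a - |b| ^ (m - 1) * b) * (a - b) := by
    rcases le_total b a with h | h
    · rcases le_total 0 (a + b) with h' | h'
      · exact pm_main m hm a b h h'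
      · have := pm_main m hm (-b) (-a) (by linarith) (by linarith)
        simp only [abs_neg] at this
        have e1 : -b - -a = a - b := by ring
        rw [e1] at this
        nlinarith [this]
    · rcases le_total 0 (a + b) with h' | h'
      · have := pm_main m hm b a h (by linarith)
        have e1 : |b - a| = |a - b| := abs_sub_comm b a
        rw [e1] at this
        nlinarith [this]
      · have := pm_main m hm (-a) (-b) (by linarith) (by linarith)
        simp only [abs_neg] at this
        have e1 : -a - -b = -(a - b) := by ring
        rw [e1, abs_neg] at this
        nlinarith [this]
  refine ⟨le_trans ?_ main, main⟩
  positivity
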